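/- arXiv:2510.10358 — 2 statements merged into one kernel-verified Lean document; each statement's English description precedes it below -/
import Mathlib

section
/- Let (p_n) be a sequence with p_n ∈ (0, 1/e) for all n, and suppose √n · p_n · (-ln p_n) → 0 as n → ∞ and that (p_n·(-ln p_n)) is bounded above by some B < 1. Then √n · (p_n·(-ln p_n))^(1 - n^(-1/q)) → 0 as n → ∞ for any fixed natural q ≥ 1. -/
open Filter Real

/-- If √n·p_n·(-ln p_n) → 0 and p_n·(-ln p_n) ≤ B < 1, then
    √n·(p_n·(-ln p_n))^(1 - n^(-1/q)) → 0. -/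
theorem stmt_6 (q : ℕ) (hq : 1 ≤ q) (p : ℕ → ℝ)
    (hp : ∀ n, 0 < p n ∧ p n < 1 / Real.exp 1)
    (B : ℝ) (hB : B < 1) (hbound : ∀ n, p n * (-Real.log (p n)) ≤ B)
    (hlim : Tendsto (fun n : ℕ => Real.sqrt n * (p n * (-Real.log (p n))))
      atTop (nhds 0)) :
    Tendsto
      (fun n : ℕ =>
        Real.sqrt n *
          (p n * (-Real.log (p n))) ^ ((1 : ℝ) - (n : ℝ) ^ (-(1 : ℝ) / q)))
      atTop (nhds 0) := by
  set u : ℕ → ℝ := fun n => p n * (-Real.log (p n)) with hudef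
  set ε : ℕ → ℝ := fun n => (n : ℝ) ^ ((-(1 : ℝ)) / q) with hεdef
  have hq0 : (0 : ℝ) < 1 / q := by
    have : (0 : ℝ) < q := by exact_mod_cast hq
    positivity
  have hεlim : Tendsto ε atTop (nhds 0) := by
    have h := (tendsto_rpow_neg_atTop hq0).comp
      (tendsto_natCast_atTop_atTop (R := ℝ))
    simpa [ε, neg_div, Function.comp_def] using h
  have hu : ∀ n, 0 < u n := by
    intro n
    have h1 := (hp n).1
    have h2 : p n < 1 := by
      have he : (1 : ℝ) < Real.exp 1 := by nlinarith [Real.add_one_le_exp (1 : ℝ)]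
      have := (hp n).2
      have h3 : 1 / Real.exp 1 < 1 := by
        rw [div_lt_one (Real.exp_pos 1)]; exact he
      linarith [(hp n).2]
    have hlog : Real.log (p n) < 0 := Real.log_neg h1 h2
    have : 0 < -Real.log (p n) := by linarith
    exact mul_pos h1 this
  -- key algebraic identity for n ≥ 1
  have key : ∀ n : ℕ, 1 ≤ n →
      Real.sqrt n * u n ^ ((1 : ℝ) - ε n)
        = (Real.sqrt n * u n) ^ ((1 : ℝ) - ε n) * Real.sqrt n ^ ε n := by
    intro n hn
    have hs : 0 < Real.sqrt n := Real.sqrt_pos.2 (by exact_mod_cast hn)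
    rw [Real.mul_rpow hs.le (hu n).le, mul_right_comm, ← Real.rpow_add hs,
      sub_add_cancel, Real.rpow_one]
  -- first factor tends to 0
  have h1 : Tendsto (fun n : ℕ => (Real.sqrt n * u n) ^ ((1 : ℝ) - ε n))
      atTop (nhds 0) := by
    have hsqrt : Tendsto (fun n : ℕ => Real.sqrt (Real.sqrt n * u n))
        atTop (nhds 0) := by
      simpa only [Real.sqrt_zero] using hlim.sqrt
    apply squeeze_zero'
    · filter_upwards [eventually_ge_atTop 1] with n hn
      have hs : 0 < Real.sqrt n := Real.sqrt_pos.2 (by exact_mod_cast hn)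
      exact (Real.rpow_pos_of_pos (mul_pos hs (hu n)) _).le
    · have hev1 : ∀ᶠ n : ℕ in atTop, Real.sqrt n * u n ≤ 1 := by
        filter_upwards [hlim.eventually (eventually_le_nhds (by norm_num : (0:ℝ) < 1))]
          with n hn using hn
      have hev2 : ∀ᶠ n : ℕ in atTop, ε n ≤ 1 / 2 := by
        filter_upwards [hεlim.eventually (eventually_le_nhds (by norm_num : (0:ℝ) < 1/2))]
          with n hn using hn
      filter_upwards [hev1, hev2, eventually_ge_atTop 1] with n h1' h2' hn
      have hs : 0 < Real.sqrt n := Real.sqrt_pos.2 (by exact_mod_cast hn)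
      have hx : 0 < Real.sqrt n * u n := mul_pos hs (hu n)
      calc (Real.sqrt n * u n) ^ ((1 : ℝ) - ε n)
          ≤ (Real.sqrt n * u n) ^ ((1 : ℝ) / 2) := by
            apply Real.rpow_le_rpow_of_exponent_ge hx h1'
            linarith
        _ = Real.sqrt (Real.sqrt n * u n) := (Real.sqrt_eq_rpow _).symm
    · exact hsqrt
  -- second factor tends to 1
  have h2 : Tendsto (fun n : ℕ => Real.sqrt n ^ ε n) atTop (nhds 1) := by
    have hlog : Tendsto (fun n : ℕ => ε n * Real.log (Real.sqrt n))
        atTop (nhds 0) := by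
      have hbase : Tendsto (fun x : ℝ => Real.log x / x ^ ((1:ℝ)/q)) atTop (nhds 0) :=
        (isLittleO_log_rpow_atTop hq0).tendsto_div_nhds_zero
      have hcomp := hbase.comp (tendsto_natCast_atTop_atTop (R := ℝ))
      have heq : ∀ᶠ n : ℕ in atTop,
          (fun x : ℝ => Real.log x / x ^ ((1:ℝ)/q)) ((n : ℝ))
            = ε n * Real.log (Real.sqrt n) * 2 := by
        filter_upwards [eventually_ge_atTop 1] with n hn
        have hn0 : (0 : ℝ) < (n : ℝ) := by exact_mod_cast hn
        have hlogsqrt : Real.log (Real.sqrt n) = Real.log n / 2 :=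
          Real.log_sqrt hn0.le
        have hrp : (n : ℝ) ^ ((-(1:ℝ))/q) = ((n : ℝ) ^ ((1:ℝ)/q))⁻¹ := by
          rw [neg_div, Real.rpow_neg hn0.le]
        simp only [ε, hrp, hlogsqrt]
        field_simp
      have := (hcomp.congr' heq)
      have h2' : Tendsto (fun n : ℕ => ε n * Real.log (Real.sqrt n) * 2 / 2)
          atTop (nhds (0 / 2)) := this.div_const 2
      simpa using h2'
    have hexp : Tendsto (fun n : ℕ => Real.exp (ε n * Real.log (Real.sqrt n)))
        atTop (nhds 1) := by
      simpa [Function.comp_def] using (Real.continuous_exp.continuousAt.tendsto.comp hlog)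
    apply hexp.congr'
    filter_upwards [eventually_ge_atTop 1] with n hn
    have hs : 0 < Real.sqrt n := Real.sqrt_pos.2 (by exact_mod_cast hn)
    rw [Real.rpow_def_of_pos hs, mul_comm]
  have := h1.mul h2
  rw [zero_mul] at this
  apply this.congr'
  filter_upwards [eventually_ge_atTop 1] with n hn
  exact (key n hn).symm
end

section
/- Let q = 1, n ≥ 2 a natural number, I > 0, θ₀ ∈ ℝ, and α ∈ (0,1) with Q := Q_{χ²₁}(1-α) satisfying Q < n·ln(n)/(n-1). Then the interval [√(Q/n)·I^(-1/2), √(ln n/(n-1))·I^(-1/2)) is nonempty, i.e., √(Q/n)·I^(-1/2) < √(ln n/(n-1))·I^(-1/2). Moreover, for any θ̂ with |θ̂ - θ₀| in this interval, the Wald statistic W = n·I·(θ̂-θ₀)² satisfies W ≥ Q (significance at level α) and W < n·ln(n)/(n-1), which is equivalent to √n·exp(-(1/2)·((n-1)/n)·W) > 1 (eJAB favors the null). -/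
/-!
Rescaling by `√I` turns the window for `|θ̂ - θ₀|` into the window `Q ≤ W < n log n / (n - 1)` for
the Wald statistic `W = n I (θ̂ - θ₀)²`, which is nonempty exactly when `Q < n log n / (n - 1)`.
Writing `√n = exp (log n / 2)`, the Bayes factor `√n · exp (-(1/2) ((n-1)/n) W)` exceeds `1` iff its
exponent is positive, i.e. iff `W < n log n / (n - 1)`.
-/

open Real

lemma sqrt_mul_inv_sqrt (c : ℝ) {a : ℝ} (ha : 0 ≤ a) : √c * (√a)⁻¹ = √(c / a) := by
  rw [sqrt_div' c ha, div_eq_mul_inv]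

section ScaledWindow

variable {a c : ℝ} (ha : 0 < a) (x : ℝ)
include ha

lemma sqrt_div_le_abs_iff : √(c / a) ≤ |x| ↔ c ≤ a * x ^ 2 := by
  rw [← sqrt_sq_eq_abs, sqrt_le_sqrt_iff (sq_nonneg x), div_le_iff₀' ha]

lemma abs_lt_sqrt_div_iff : |x| < √(c / a) ↔ a * x ^ 2 < c := by
  rw [← sqrt_sq_eq_abs, sqrt_lt_sqrt_iff (sq_nonneg x), lt_div_iff₀' ha]

end ScaledWindow

lemma one_lt_sqrt_mul_exp_iff {x : ℝ} (hx : 1 < x) (W : ℝ) :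
    1 < √x * exp (-(1 / 2) * ((x - 1) / x) * W) ↔ W < x * log x / (x - 1) := by
  have hx0 : 0 < x := by linarith
  have hx1 : 0 < x - 1 := by linarith
  have hexponent :
      log x / 2 + -(1 / 2) * ((x - 1) / x) * W = (x * log x - W * (x - 1)) / (2 * x) := by
    field_simp
    ring
  rw [← exp_log (sqrt_pos.2 hx0), log_sqrt hx0.le, ← exp_add, one_lt_exp_iff, hexponent,
    div_pos_iff_of_pos_right (by positivity), sub_pos, lt_div_iff₀ hx1]

theorem stmt_12_general (n : ℕ) (hn : 2 ≤ n) (I : ℝ) (hI : 0 < I) (θ₀ : ℝ)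
    (Q : ℝ)
    (hQlt : Q < n * Real.log n / (n - 1)) :
    Real.sqrt (Q / n) * (Real.sqrt I)⁻¹ <
      Real.sqrt (Real.log n / (n - 1)) * (Real.sqrt I)⁻¹ ∧
    ∀ θhat : ℝ,
      Real.sqrt (Q / n) * (Real.sqrt I)⁻¹ ≤ |θhat - θ₀| →
      |θhat - θ₀| < Real.sqrt (Real.log n / (n - 1)) * (Real.sqrt I)⁻¹ →
      Q ≤ n * I * (θhat - θ₀) ^ 2 ∧
      n * I * (θhat - θ₀) ^ 2 < n * Real.log n / (n - 1) ∧
      (n * I * (θhat - θ₀) ^ 2 < n * Real.log n / (n - 1) ↔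
        1 < Real.sqrt n *
          Real.exp (-(1 / 2) * (((n : ℝ) - 1) / n) * (n * I * (θhat - θ₀) ^ 2))) := by
  have hn1 : (1 : ℝ) < n := by exact_mod_cast hn
  have hn0 : (0 : ℝ) < n := by linarith
  have hL : 0 < log n / (n - 1) := div_pos (log_pos hn1) (by linarith)
  have hQL : Q / n < log n / (n - 1) := by rwa [div_lt_iff₀' hn0, ← mul_div_assoc]
  simp only [sqrt_mul_inv_sqrt _ hI.le]
  refine ⟨(sqrt_lt_sqrt_iff_of_pos (div_pos hL hI)).2 (div_lt_div_of_pos_right hQL hI),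
    fun θhat hlo hhi => ⟨?_, ?_, (one_lt_sqrt_mul_exp_iff hn1 _).symm⟩⟩
  · rw [sqrt_div_le_abs_iff hI, div_le_iff₀' hn0] at hlo
    linarith
  · rw [abs_lt_sqrt_div_iff hI, ← mul_lt_mul_iff_right₀ hn0, ← mul_div_assoc] at hhi
    linarith

/-- The candidate type I error effect-size window for q = 1. -/
theorem stmt_12 (n : ℕ) (hn : 2 ≤ n) (I : ℝ) (hI : 0 < I) (θ₀ : ℝ)
    (α : ℝ) (hα0 : 0 < α) (hα1 : α < 1) (Q : ℝ) (hQ : 0 < Q)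
    (hQlt : Q < n * Real.log n / (n - 1)) :
    Real.sqrt (Q / n) * (Real.sqrt I)⁻¹ <
      Real.sqrt (Real.log n / (n - 1)) * (Real.sqrt I)⁻¹ ∧
    ∀ θhat : ℝ,
      Real.sqrt (Q / n) * (Real.sqrt I)⁻¹ ≤ |θhat - θ₀| →
      |θhat - θ₀| < Real.sqrt (Real.log n / (n - 1)) * (Real.sqrt I)⁻¹ →
      Q ≤ n * I * (θhat - θ₀) ^ 2 ∧
      n * I * (θhat - θ₀) ^ 2 < n * Real.log n / (n - 1) ∧
      (n * I * (θhat - θ₀) ^ 2 < n * Real.log n / (n - 1) ↔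
        1 < Real.sqrt n *
          Real.exp (-(1 / 2) * (((n : ℝ) - 1) / n) * (n * I * (θhat - θ₀) ^ 2))) :=
  stmt_12_general n hn I hI θ₀ Q hQlt
end
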